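/- arXiv:1107.3960 — 5 statements merged into one kernel-verified Lean document; each statement's English description precedes it below -/
import Mathlib

section
/- For a₁, a₂ > 0, the function g_{a₁,a₂}(u) = 4·u·(a₂ + u − a₂u) / (a₁ + a₂ − (a₁ + a₂ − 2)u)² is strictly increasing on [0,1]. -/
theorem stmt_2 (a₁ a₂ : ℝ) (ha₁ : 0 < a₁) (ha₂ : 0 < a₂) :
    StrictMonoOn (fun u : ℝ =>
      4 * u * (a₂ + u - a₂ * u) / (a₁ + a₂ - (a₁ + a₂ - 2) * u) ^ 2)
      (Set.Icc (0:ℝ) 1) := by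
  intro x hx y hy hxy
  obtain ⟨hx0, hx1⟩ := hx
  obtain ⟨hy0, hy1⟩ := hy
  have hDx : 0 < a₁ + a₂ - (a₁ + a₂ - 2) * x := by nlinarith
  have hDy : 0 < a₁ + a₂ - (a₁ + a₂ - 2) * y := by nlinarith
  have hs : 0 < a₁ + a₂ := by linarith
  have h1x : (0:ℝ) ≤ (a₁ + a₂) * (1 - x) := by
    have := sub_nonneg.2 hx1; positivity
  have h1y : (0:ℝ) ≤ (a₁ + a₂) * (1 - y) := by
    have := sub_nonneg.2 hy1; positivity
  have hA : 0 < a₂ * (a₁ + a₂ - (a₁ + a₂ - 2) * y) - 2 * (a₂ - a₁) * y := by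
    rcases lt_or_ge 0 y with hy | hy
    · nlinarith [mul_nonneg ha₂.le h1y, mul_pos ha₁ hy]
    · have : y = 0 := le_antisymm hy hy0
      subst this; nlinarith [mul_pos ha₂ hs]
  have hB : 0 < a₂ * (a₁ + a₂ - (a₁ + a₂ - 2) * x) - 2 * (a₂ - a₁) * x := by
    rcases lt_or_ge 0 x with hxx | hxx
    · nlinarith [mul_nonneg ha₂.le h1x, mul_pos ha₁ hxx]
    · have : x = 0 := le_antisymm hxx hx0
      subst this; nlinarith [mul_pos ha₂ hs]
  have hP : 0 < a₂ * ((a₁ + a₂ - (a₁ + a₂ - 2) * x) * (a₁ + a₂ - (a₁ + a₂ - 2) * y))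
      + (a₁ - a₂) * (y * (a₁ + a₂ - (a₁ + a₂ - 2) * x) + x * (a₁ + a₂ - (a₁ + a₂ - 2) * y)) := by
    nlinarith [mul_pos hDx hA, mul_pos hDy hB]
  simp only
  rw [div_lt_div_iff₀ (by positivity) (by positivity)]
  nlinarith [mul_pos (sub_pos.2 hxy) hP]
end

section
/- For any q ≥ 1, any positive reals a₁,…,a_q, the function g_{a₁,…,a_q}(u) = q^q · u · ∏_{i=2}^q (aᵢ + u − aᵢu) / (∑ᵢ aᵢ − (∑ᵢ aᵢ − q)u)^q is monotone increasing on [0,1] and takes values in [0,1], with g(0) = 0 and g(1) = 1. -/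
noncomputable def g (q : ℕ) (a : ℕ → ℝ) (u : ℝ) : ℝ :=
  (q : ℝ) ^ q * u * (∏ i ∈ Finset.Icc 2 q, (a i + u - a i * u)) /
    ((∑ i ∈ Finset.Icc 1 q, a i) - ((∑ i ∈ Finset.Icc 1 q, a i) - q) * u) ^ q

/-!
Write `xᵢ = aᵢ + u - aᵢu = aᵢ(1 - u) + u`, so that the denominator of `g` is `D = ∑ xᵢ` and
`g = q^q · u · ∏_{i ≥ 2} xᵢ / D^q`. Since `u(1 - aᵢ)/xᵢ = 1 - aᵢ/xᵢ`, logarithmic differentiation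
gives `g' = q^q · ∏_{i ≥ 2} xᵢ · (q ∑ aᵢ - R · D) / D^(q+1)` with `R = ∑_{i ≥ 2} aᵢ/xᵢ`.
Both `aᵢ/xᵢ` and `xᵢ` increase with `aᵢ`, so Chebyshev's sum inequality gives
`(∑ aᵢ/xᵢ) · ∑ xᵢ ≤ q ∑ aᵢ`, whence `g' ≥ 0`. The range follows from `g 0 = 0` and `g 1 = 1`.
-/

open Finset

section AffineFactors

variable {ι : Type*} {s : Finset ι} {a : ι → ℝ} {u : ℝ}

lemma add_sub_mul_pos {c : ℝ} (hc : 0 < c) (hu : u ∈ Set.Icc (0 : ℝ) 1) : 0 < c + u - c * u := by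
  obtain ⟨h0, h1⟩ := hu
  nlinarith [mul_nonneg hc.le (sub_nonneg.2 h1)]

lemma sum_add_sub_mul (s : Finset ι) (a : ι → ℝ) (u : ℝ) :
    ∑ i ∈ s, (a i + u - a i * u) = ∑ i ∈ s, a i - (∑ i ∈ s, a i - #s) * u := by
  simp only [sum_sub_distrib, sum_add_distrib, sum_const, nsmul_eq_mul, ← sum_mul]
  ring

lemma sum_div_mul_sum_le_card_mul_sum (ha : ∀ i ∈ s, 0 < a i) (hu : u ∈ Set.Icc (0 : ℝ) 1) :
    (∑ i ∈ s, a i / (a i + u - a i * u)) * ∑ i ∈ s, (a i + u - a i * u) ≤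
      #s * ∑ i ∈ s, a i := by
  have hx i (hi : i ∈ s) := add_sub_mul_pos (ha i hi) hu
  have hmono : MonovaryOn (fun i ↦ a i / (a i + u - a i * u)) (fun i ↦ a i + u - a i * u) s := by
    intro i hi j hj hij
    have hlt : a i < a j := by nlinarith [hu.2]
    rw [div_le_div_iff₀ (hx i hi) (hx j hj)]
    nlinarith [hu.1]
  have hcheb := hmono.sum_mul_sum_le_card_mul_sum
  rwa [sum_congr rfl fun i hi ↦ div_mul_cancel₀ (a i) (hx i hi).ne'] at hcheb

lemma hasDerivAt_prod_add_sub_mul (hx : ∀ i ∈ s, a i + u - a i * u ≠ 0) :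
    HasDerivAt (fun v ↦ ∏ i ∈ s, (a i + v - a i * v))
      ((∏ i ∈ s, (a i + u - a i * u)) * ∑ i ∈ s, (1 - a i) / (a i + u - a i * u)) u := by
  classical
  have hfac : ∀ i ∈ s, HasDerivAt (fun v ↦ a i + v - a i * v) (1 - a i) u := fun i _ ↦ by
    simpa using ((hasDerivAt_id u).const_add (a i)).fun_sub ((hasDerivAt_id u).const_mul (a i))
  refine (HasDerivAt.fun_finsetProd hfac).congr_deriv ?_
  rw [mul_sum]
  refine sum_congr rfl fun i hi ↦ ?_
  rw [← mul_prod_erase s _ hi, smul_eq_mul, mul_comm (a i + u - a i * u), mul_assoc,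
    mul_div_cancel₀ _ (hx i hi)]

lemma mul_sum_one_sub_div (hx : ∀ i ∈ s, a i + u - a i * u ≠ 0) :
    u * ∑ i ∈ s, (1 - a i) / (a i + u - a i * u) =
      #s - ∑ i ∈ s, a i / (a i + u - a i * u) := by
  rw [mul_sum, card_eq_sum_ones, Nat.cast_sum, Nat.cast_one, ← sum_sub_distrib]
  refine sum_congr rfl fun i hi ↦ ?_
  rw [mul_div_assoc', eq_sub_iff_add_eq, ← add_div, div_eq_one_iff_eq (hx i hi)]
  ring

end AffineFactors

section

variable {q : ℕ} {a : ℕ → ℝ} {u : ℝ}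

lemma g_zero : g q a 0 = 0 := by simp [g]

lemma g_one : g q a 1 = 1 := by
  have hq : (q : ℝ) ^ q ≠ 0 := by
    rcases q with _ | q
    · simp
    · positivity
  simp [g, hq]

lemma g_denom_eq_sum :
    ∑ i ∈ Icc 1 q, a i - (∑ i ∈ Icc 1 q, a i - q) * u = ∑ i ∈ Icc 1 q, (a i + u - a i * u) := by
  rw [sum_add_sub_mul, Nat.card_Icc, Nat.add_sub_cancel]

lemma g_denom_pos (hq : 1 ≤ q) (ha : ∀ i ∈ Icc 1 q, 0 < a i) (hu : u ∈ Set.Icc (0 : ℝ) 1) :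
    0 < ∑ i ∈ Icc 1 q, a i - (∑ i ∈ Icc 1 q, a i - q) * u := by
  rw [g_denom_eq_sum]
  exact sum_pos (fun i hi ↦ add_sub_mul_pos (ha i hi) hu) ⟨1, by simp [hq]⟩

lemma sum_div_mul_g_denom_le (hq : 1 ≤ q) (ha : ∀ i ∈ Icc 1 q, 0 < a i)
    (hu : u ∈ Set.Icc (0 : ℝ) 1) :
    (∑ i ∈ Icc 2 q, a i / (a i + u - a i * u)) *
        (∑ i ∈ Icc 1 q, a i - (∑ i ∈ Icc 1 q, a i - q) * u) ≤ q * ∑ i ∈ Icc 1 q, a i := by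
  calc _ ≤ (∑ i ∈ Icc 1 q, a i / (a i + u - a i * u)) *
        (∑ i ∈ Icc 1 q, a i - (∑ i ∈ Icc 1 q, a i - q) * u) := by
        gcongr ?_ * _
        · exact (g_denom_pos hq ha hu).le
        · exact sum_le_sum_of_subset_of_nonneg (Icc_subset_Icc_left one_le_two)
            fun i hi _ ↦ (div_pos (ha i hi) (add_sub_mul_pos (ha i hi) hu)).le
    _ ≤ q * ∑ i ∈ Icc 1 q, a i := by
        simpa [g_denom_eq_sum] using sum_div_mul_sum_le_card_mul_sum ha hu

lemma hasDerivAt_g (hq : 1 ≤ q) (ha : ∀ i ∈ Icc 1 q, 0 < a i) (hu : u ∈ Set.Icc (0 : ℝ) 1) :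
    HasDerivAt (g q a)
      ((q : ℝ) ^ q * (∏ i ∈ Icc 2 q, (a i + u - a i * u)) *
          (q * ∑ i ∈ Icc 1 q, a i - (∑ i ∈ Icc 2 q, a i / (a i + u - a i * u)) *
            (∑ i ∈ Icc 1 q, a i - (∑ i ∈ Icc 1 q, a i - q) * u)) /
        (∑ i ∈ Icc 1 q, a i - (∑ i ∈ Icc 1 q, a i - q) * u) ^ (q + 1)) u := by
  have hx : ∀ i ∈ Icc 2 q, a i + u - a i * u ≠ 0 := fun i hi ↦
    (add_sub_mul_pos (ha i (Icc_subset_Icc_left one_le_two hi)) hu).ne'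
  have hD := g_denom_pos hq ha hu
  have hlog := mul_sum_one_sub_div hx
  rw [Nat.card_Icc, Nat.cast_sub (by omega), Nat.cast_add, Nat.cast_two] at hlog
  set S := ∑ i ∈ Icc 1 q, a i
  set P := ∏ i ∈ Icc 2 q, (a i + u - a i * u)
  set D := S - (S - q) * u
  have hnum := ((hasDerivAt_id u).const_mul ((q : ℝ) ^ q)).mul (hasDerivAt_prod_add_sub_mul hx)
  have hden := (((hasDerivAt_id u).const_mul (S - q)).const_sub S).pow q
  refine (hnum.div hden (pow_pos hD q).ne').congr_deriv ?_
  simp only [Pi.mul_apply, Pi.pow_apply, id, mul_one]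
  rw [div_eq_div_iff (by positivity) (by positivity), pow_succ D q,
    ← pow_sub_one_mul (by omega : q ≠ 0) D]
  linear_combination ((q : ℝ) ^ q * P * (D ^ (q - 1)) ^ 2 * D ^ 3) * hlog

lemma monotoneOn_g (hq : 1 ≤ q) (ha : ∀ i ∈ Icc 1 q, 0 < a i) :
    MonotoneOn (g q a) (Set.Icc 0 1) := by
  refine monotoneOn_of_hasDerivWithinAt_nonneg (convex_Icc 0 1)
    (fun u hu ↦ (hasDerivAt_g hq ha hu).continuousAt.continuousWithinAt)
    (fun u hu ↦ (hasDerivAt_g hq ha (interior_subset hu)).hasDerivWithinAt) fun u hu ↦ ?_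
  replace hu := interior_subset hu
  have hP : 0 < ∏ i ∈ Icc 2 q, (a i + u - a i * u) := prod_pos fun i hi ↦
    add_sub_mul_pos (ha i (Icc_subset_Icc_left one_le_two hi)) hu
  exact div_nonneg
    (mul_nonneg (mul_nonneg (by positivity) hP.le) (sub_nonneg.2 (sum_div_mul_g_denom_le hq ha hu)))
    (pow_pos (g_denom_pos hq ha hu) _).le

end

theorem stmt_4 (q : ℕ) (hq : 1 ≤ q) (a : ℕ → ℝ)
    (ha : ∀ i ∈ Finset.Icc 1 q, 0 < a i) :
    MonotoneOn (g q a) (Set.Icc (0:ℝ) 1) ∧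
    Set.MapsTo (g q a) (Set.Icc (0:ℝ) 1) (Set.Icc (0:ℝ) 1) ∧
    g q a 0 = 0 ∧ g q a 1 = 1 := by
  have hmono := monotoneOn_g hq ha
  refine ⟨hmono, fun u hu ↦ ⟨?_, ?_⟩, g_zero, g_one⟩
  · simpa [g_zero] using hmono (Set.left_mem_Icc.2 zero_le_one) hu hu.1
  · simpa [g_one] using hmono hu (Set.right_mem_Icc.2 zero_le_one) hu.2
end

section
/- For all u ∈ [0,1], all b > 0 and all positive reals a₁,…,a_q, the composition identity g_{a₁,…,a_q}(g_{b,…,b}(u)) = g_{b·a₁,…,b·a_q}(u) holds, where g_{b,…,b}(u) = u/(b + (1−b)u). -/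
/-
Put `D = b + (1 - b) u` and `v = u / D`. Every affine expression `c - (c - x) v` occurring in
`g q a v` equals `(b c - (b c - x) u) / D`: for the `q - 1` factors of the product take `c = aᵢ`,
`x = 1`, for the denominator `c = ∑ aᵢ`, `x = q`. The resulting `D⁻¹` from `v` and the `q - 1`
factors cancel the `D⁻ᵠ` coming out of the denominator's `q`-th power.
-/

open Finset

lemma sub_sub_mul_div_mobius {b u : ℝ} (hD : b + (1 - b) * u ≠ 0) (c x : ℝ) :
    c - (c - x) * (u / (b + (1 - b) * u)) = (b * c - (b * c - x) * u) / (b + (1 - b) * u) := by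
  rw [eq_div_iff hD, sub_mul, mul_assoc, div_mul_cancel₀ u hD]
  ring

lemma mobius_denom_pos {b u : ℝ} (hb : 0 < b) (hu : u ∈ Set.Icc (0 : ℝ) 1) :
    0 < b + (1 - b) * u := by
  nlinarith [mul_nonneg hb.le (sub_nonneg.2 hu.2), hu.1]

theorem g_mobius {q : ℕ} (hq : 1 ≤ q) (a : ℕ → ℝ) {b u : ℝ} (hD : b + (1 - b) * u ≠ 0) :
    g q a (u / (b + (1 - b) * u)) = g q (fun i => b * a i) u := by
  set D := b + (1 - b) * u
  have hfactor (i : ℕ) : a i + u / D - a i * (u / D) = (b * a i + u - b * a i * u) / D := by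
    linear_combination sub_sub_mul_div_mobius hD (a i) 1
  have hpow : D * D ^ #(Icc 2 q) = D ^ q := by
    rw [Nat.card_Icc, ← pow_succ']
    congr 1
    omega
  unfold g
  rw [prod_congr rfl fun i _ => hfactor i, prod_div_distrib, prod_const, ← mul_sum,
    sub_sub_mul_div_mobius hD, div_pow, ← hpow]
  field_simp

theorem stmt_7_general (q : ℕ) (hq : 1 ≤ q) (a : ℕ → ℝ)
    (b : ℝ) (hb : 0 < b)
    (u : ℝ) (hu : u ∈ Set.Icc (0:ℝ) 1) :
    g q a (u / (b + (1 - b) * u)) = g q (fun i => b * a i) u :=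
  g_mobius hq a (mobius_denom_pos hb hu).ne'

theorem stmt_7 (q : ℕ) (hq : 1 ≤ q) (a : ℕ → ℝ)
    (ha : ∀ i ∈ Finset.Icc 1 q, 0 < a i) (b : ℝ) (hb : 0 < b)
    (u : ℝ) (hu : u ∈ Set.Icc (0:ℝ) 1) :
    g q a (u / (b + (1 - b) * u)) = g q (fun i => b * a i) u :=
  stmt_7_general q hq a b hb u hu
end

section
/- For q ≥ 3 and positive reals a₁,…,a_q, one has the reduction identity g_{a₁,…,a_q}(u) = g_{a₁/a_q,…,a_{q−1}/a_q, 1}(g_{a_q,…,a_q}(u)) for all u ∈ [0,1], where g_{a_q,…,a_q}(u) = u/(a_q + (1−a_q)u). -/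
theorem div_sub_sub_mul_div_mobius {b t c u : ℝ} (hc : c ≠ 0) (hd : c + (1 - c) * u ≠ 0) :
    b / c - (b / c - t) * (u / (c + (1 - c) * u)) = (b - (b - t) * u) / (c + (1 - c) * u) := by
  rw [eq_div_iff hd, sub_mul, mul_assoc, div_mul_cancel₀ _ hd]
  field_simp
  ring

theorem g_div_mobius {q : ℕ} (hq : 1 ≤ q) (a : ℕ → ℝ) {c u : ℝ} (hc : c ≠ 0)
    (hd : c + (1 - c) * u ≠ 0) :
    g q (fun i => a i / c) (u / (c + (1 - c) * u)) = g q a u := by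
  set d := c + (1 - c) * u
  have hfactor (i : ℕ) : a i / c + u / d - a i / c * (u / d) = (a i + u - a i * u) / d := by
    rw [show a i / c + u / d - a i / c * (u / d) = a i / c - (a i / c - 1) * (u / d) by ring,
      div_sub_sub_mul_div_mobius hc hd]
    ring
  have hprod : ∏ i ∈ Finset.Icc 2 q, (a i / c + u / d - a i / c * (u / d)) =
      (∏ i ∈ Finset.Icc 2 q, (a i + u - a i * u)) / d ^ (q - 1) := by
    simp only [hfactor, Finset.prod_div_distrib, Finset.prod_const, Nat.card_Icc,
      show q + 1 - 2 = q - 1 by omega]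
  have hsum : ∑ i ∈ Finset.Icc 1 q, a i / c = (∑ i ∈ Finset.Icc 1 q, a i) / c :=
    (Finset.sum_div _ _ _).symm
  have hpow : d ^ q = d * d ^ (q - 1) := by
    rw [← pow_succ', Nat.sub_add_cancel hq]
  unfold g
  rw [hprod, hsum, div_sub_sub_mul_div_mobius hc hd, div_pow, div_div_eq_mul_div, hpow]
  field_simp

theorem add_one_sub_mul_pos_of_mem_Icc {c u : ℝ} (hc : 0 < c) (hu : u ∈ Set.Icc (0:ℝ) 1) :
    0 < c + (1 - c) * u := by
  obtain ⟨hu0, hu1⟩ := hu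
  nlinarith [mul_nonneg hc.le (sub_nonneg.2 hu1), mul_nonneg hu0 (sub_nonneg.2 hu1)]

theorem stmt_8 (q : ℕ) (hq : 3 ≤ q) (a : ℕ → ℝ)
    (ha : ∀ i ∈ Finset.Icc 1 q, 0 < a i)
    (u : ℝ) (hu : u ∈ Set.Icc (0:ℝ) 1) :
    g q a u =
      g q (fun i => if i = q then 1 else a i / a q)
        (u / (a q + (1 - a q) * u)) := by
  have hq1 : 1 ≤ q := by omega
  have haq : 0 < a q := ha q (Finset.mem_Icc.2 ⟨hq1, le_rfl⟩)
  have hnormalize : (fun i => if i = q then 1 else a i / a q) = fun i => a i / a q := by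
    funext i
    split_ifs with hi
    · rw [hi, div_self haq.ne']
    · rfl
  rw [hnormalize, g_div_mobius hq1 a haq.ne' (add_one_sub_mul_pos_of_mem_Icc haq hu).ne']
end

section
/- If a₁,…,a_q > 0 with ∑ᵢ aᵢ ≥ q and aᵢ ≤ 1 for all 2 ≤ i ≤ q, then g_{a₁,…,a_q} is convex on [0,1] and consequently g'_{a₁,…,a_q}(u) ≤ g'_{a₁,…,a_q}(1) = a₁ for all u ∈ [0,1]. -/
open Finset

structure IsNonnegMonotoneConvexOn {𝕜 : Type*} [Field 𝕜] [LinearOrder 𝕜]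
    [IsStrictOrderedRing 𝕜] (s : Set 𝕜) (f : 𝕜 → 𝕜) : Prop where
  convexOn : ConvexOn 𝕜 s f
  monotoneOn : MonotoneOn f s
  nonneg : ∀ ⦃x⦄, x ∈ s → 0 ≤ f x

namespace IsNonnegMonotoneConvexOn

variable {𝕜 : Type*} [Field 𝕜] [LinearOrder 𝕜] [IsStrictOrderedRing 𝕜] {s : Set 𝕜}
  {f h : 𝕜 → 𝕜}

theorem mul (hf : IsNonnegMonotoneConvexOn s f) (hh : IsNonnegMonotoneConvexOn s h) :
    IsNonnegMonotoneConvexOn s (f * h) where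
  convexOn :=
    hf.convexOn.mul hh.convexOn hf.nonneg hh.nonneg (hf.monotoneOn.monovaryOn hh.monotoneOn)
  monotoneOn _ hx _ hy hxy :=
    mul_le_mul (hf.monotoneOn hx hy hxy) (hh.monotoneOn hx hy hxy) (hh.nonneg hx) (hf.nonneg hy)
  nonneg _ hx := mul_nonneg (hf.nonneg hx) (hh.nonneg hx)

theorem const (hs : Convex 𝕜 s) {c : 𝕜} (hc : 0 ≤ c) :
    IsNonnegMonotoneConvexOn s fun _ ↦ c :=
  ⟨convexOn_const c hs, monotoneOn_const, fun _ _ ↦ hc⟩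

theorem pow (hf : IsNonnegMonotoneConvexOn s f) : ∀ n : ℕ, IsNonnegMonotoneConvexOn s (f ^ n)
  | 0 => by rw [pow_zero]; exact const hf.convexOn.1 zero_le_one
  | n + 1 => by rw [pow_succ]; exact (hf.pow n).mul hf

theorem finsetProd {ι : Type*} (hs : Convex 𝕜 s) (t : Finset ι) {f : ι → 𝕜 → 𝕜}
    (hf : ∀ i ∈ t, IsNonnegMonotoneConvexOn s (f i)) :
    IsNonnegMonotoneConvexOn s fun x ↦ ∏ i ∈ t, f i x := by
  classical
  induction t using Finset.cons_induction with
  | empty => simpa using const hs zero_le_one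
  | cons i t _ ih =>
    simp only [Finset.prod_cons]
    exact (hf i (mem_cons_self i t)).mul (ih fun j hj ↦ hf j (mem_cons_of_mem hj))

theorem affine (hs : Convex 𝕜 s) (hs₀ : s ⊆ Set.Ici 0) {c d : 𝕜} (hc : 0 ≤ c)
    (hd : 0 ≤ d) :
    IsNonnegMonotoneConvexOn s fun x ↦ c + d * x where
  convexOn := (convexOn_const c hs).add ((convexOn_id hs).smul hd)
  monotoneOn x _ y _ hxy := by dsimp only; gcongr
  nonneg x hx := by have : 0 ≤ x := hs₀ hx; positivity

theorem inv_affine (hs : Convex 𝕜 s) {c d : 𝕜} (hd : 0 ≤ d) (hpos : ∀ x ∈ s, 0 < c - d * x) :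
    IsNonnegMonotoneConvexOn s fun x ↦ (c - d * x)⁻¹ where
  convexOn := by
    refine ⟨hs, fun x hx y hy α β hα hβ hαβ ↦ ?_⟩
    have key : c - d * (α • x + β • y) = α • (c - d * x) + β • (c - d * y) := by
      simp only [smul_eq_mul]; linear_combination (-c) * hαβ
    have := (convexOn_zpow (𝕜 := 𝕜) (-1)).2 (hpos x hx) (hpos y hy) hα hβ hαβ
    simpa only [key, zpow_neg, zpow_one] using this
  monotoneOn x hx y hy hxy := inv_anti₀ (hpos y hy) (by gcongr)
  nonneg x hx := (inv_pos.2 (hpos x hx)).le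

end IsNonnegMonotoneConvexOn

theorem hasDerivAt_prod_affine_one {ι : Type*} (t : Finset ι) (a : ι → ℝ) :
    HasDerivAt (fun u ↦ ∏ i ∈ t, (a i + u - a i * u)) (∑ i ∈ t, (1 - a i)) 1 := by
  have hfactor (i : ι) : HasDerivAt (fun u ↦ a i + u - a i * u) (1 - a i) 1 := by
    simpa using
      ((hasDerivAt_id (1 : ℝ)).const_add (a i)).fun_sub ((hasDerivAt_id 1).const_mul (a i))
  classical
  exact (HasDerivAt.fun_finsetProd fun i _ ↦ hfactor i).congr_deriv
    (sum_congr rfl fun i _ ↦ by simp)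

theorem sum_Icc_one_eq_add_sum_Icc_two {M : Type*} [AddCommMonoid M] {q : ℕ} (hq : 1 ≤ q)
    (a : ℕ → M) :
    ∑ i ∈ Icc 1 q, a i = a 1 + ∑ i ∈ Icc 2 q, a i := by
  rw [← Finset.insert_Icc_add_one_left_eq_Icc hq, sum_insert (by simp)]
  rfl

theorem sub_sub_mul_pos {c S u : ℝ} (hc : 0 < c) (hS : c ≤ S) (hu : u ∈ Set.Icc 0 1) :
    0 < S - (S - c) * u := by
  nlinarith [hu.1, hu.2]

theorem differentiableAt_g {q : ℕ} {a : ℕ → ℝ} {u : ℝ}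
    (hu : (∑ i ∈ Icc 1 q, a i) - ((∑ i ∈ Icc 1 q, a i) - q) * u ≠ 0) :
    DifferentiableAt ℝ (g q a) u := by
  unfold g
  fun_prop (disch := exact pow_ne_zero _ hu)

theorem g_eq_mul (q : ℕ) (a : ℕ → ℝ) :
    g q a = fun u ↦ (q : ℝ) ^ q * u * (∏ i ∈ Icc 2 q, (a i + (1 - a i) * u)) *
      ((∑ i ∈ Icc 1 q, a i) - ((∑ i ∈ Icc 1 q, a i) - q) * u)⁻¹ ^ q := by
  funext u
  simp only [g, div_eq_mul_inv, inv_pow]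
  congr 2
  exact prod_congr rfl fun i _ ↦ by ring

theorem convexOn_g {q : ℕ} {a : ℕ → ℝ} (hq : 0 < q) (ha : ∀ i ∈ Icc 2 q, 0 ≤ a i)
    (hsum : (q : ℝ) ≤ ∑ i ∈ Icc 1 q, a i) (hle : ∀ i ∈ Icc 2 q, a i ≤ 1) :
    IsNonnegMonotoneConvexOn (Set.Icc 0 1) (g q a) := by
  have hs : Convex ℝ (Set.Icc (0 : ℝ) 1) := convex_Icc 0 1
  have hs₀ : Set.Icc (0 : ℝ) 1 ⊆ Set.Ici 0 := Set.Icc_subset_Ici_self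
  rw [g_eq_mul]
  refine (((IsNonnegMonotoneConvexOn.const hs (by positivity)).mul ?_).mul ?_).mul (.pow ?_ q)
  · simpa using IsNonnegMonotoneConvexOn.affine hs hs₀ le_rfl zero_le_one
  · exact .finsetProd hs _ fun i hi ↦ .affine hs hs₀ (ha i hi) (sub_nonneg.2 (hle i hi))
  · exact .inv_affine hs (sub_nonneg.2 hsum) fun x hx ↦
      sub_sub_mul_pos (Nat.cast_pos.2 hq) hsum hx

theorem hasDerivAt_g_one {q : ℕ} (hq : 1 ≤ q) (a : ℕ → ℝ) : HasDerivAt (g q a) (a 1) 1 := by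
  set S := ∑ i ∈ Icc 1 q, a i with hS
  set T := ∑ i ∈ Icc 2 q, (1 - a i)
  have hP : ∏ i ∈ Icc 2 q, (a i + 1 - a i * 1) = 1 := prod_eq_one fun i _ ↦ by ring
  have hN : HasDerivAt (fun u ↦ (q : ℝ) ^ q * u * ∏ i ∈ Icc 2 q, (a i + u - a i * u))
      ((q : ℝ) ^ q * (1 + T)) 1 :=
    (((hasDerivAt_id' 1).const_mul _).mul (hasDerivAt_prod_affine_one _ a)).congr_deriv
      (by rw [hP]; ring)
  have hD : HasDerivAt (fun u ↦ (S - (S - q) * u) ^ q) (-((q : ℝ) ^ q * (S - q))) 1 := by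
    refine (((hasDerivAt_id' 1).const_mul (S - q)).const_sub S).pow q |>.congr_deriv ?_
    rw [show S - (S - q) * 1 = q by ring, ← pow_succ', Nat.sub_add_cancel hq]
    ring
  have hT : T = q - 1 - (S - a 1) := by
    have hcard : ((Icc 2 q).card : ℝ) = q - 1 := by
      rw [Nat.card_Icc, show q + 1 - 2 = q - 1 by omega, Nat.cast_sub hq, Nat.cast_one]
    simp only [T, hS, sum_Icc_one_eq_add_sum_Icc_two hq, sum_sub_distrib, sum_const, nsmul_eq_mul,
      hcard, mul_one]
    ring
  have hq₀ : (q : ℝ) ^ q ≠ 0 := by positivity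
  refine (hN.div hD (by simp [hq₀])).congr_deriv ?_
  simp only [hP, show S - (S - q) * 1 = q by ring]
  field_simp
  linear_combination hT

theorem stmt_11 (q : ℕ) (hq : 1 ≤ q) (a : ℕ → ℝ)
    (ha : ∀ i ∈ Finset.Icc 1 q, 0 < a i)
    (hsum : (q : ℝ) ≤ ∑ i ∈ Finset.Icc 1 q, a i)
    (hle : ∀ i ∈ Finset.Icc 2 q, a i ≤ 1) :
    ConvexOn ℝ (Set.Icc (0:ℝ) 1) (g q a) ∧
    (∀ u ∈ Set.Icc (0:ℝ) 1, deriv (g q a) u ≤ deriv (g q a) 1) ∧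
    deriv (g q a) 1 = a 1 := by
  have hconv : ConvexOn ℝ (Set.Icc 0 1) (g q a) :=
    (convexOn_g hq (fun i hi ↦ (ha i (Icc_subset_Icc_left one_le_two hi)).le) hsum hle).convexOn
  have hdiff (u : ℝ) (hu : u ∈ Set.Icc 0 1) : DifferentiableAt ℝ (g q a) u :=
    differentiableAt_g (sub_sub_mul_pos (Nat.cast_pos.2 hq) hsum hu).ne'
  exact ⟨hconv, fun u hu ↦ hconv.monotoneOn_deriv hdiff hu ⟨zero_le_one, le_rfl⟩ hu.2,
    (hasDerivAt_g_one hq a).deriv⟩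
end
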